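/- arXiv:1004.4743 — 9 statements merged into one kernel-verified Lean document; each statement's English description precedes it below -/
import Mathlib

section
/- If (X,F) is a nonwandering discrete dynamical system (every point is nonwandering), then the set of recurrent points of F is a residual (comeager) subset of X. -/
open Set Metric

/-- Any nonwandering DDS (compact metric space, continuous map, every point
nonwandering) has a residual set of recurrent points. -/
theorem stmt0 {X : Type*} [MetricSpace X] [CompactSpace X] (F : X → X) (hF : Continuous F)
    (hnw : ∀ x : X, ∀ U ∈ nhds x, ∃ y ∈ U, ∃ t > 0, F^[t] y ∈ U) :
    {x : X | ∀ U ∈ nhds x, ∃ t > 0, F^[t] x ∈ U} ∈ residual X := by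
  set G : ℕ → Set X := fun n => {x | ∃ t > 0, dist (F^[t] x) x < 1 / (n + 1)} with hG
  have hopen : ∀ n, IsOpen (G n) := by
    intro n
    have : G n = ⋃ t ∈ {t : ℕ | 0 < t}, {x | dist (F^[t] x) x < 1 / (n + 1)} := by
      ext x; simp [hG]
    rw [this]
    refine isOpen_biUnion fun t _ => ?_
    exact isOpen_lt (Continuous.dist ((hF.iterate t)) continuous_id) continuous_const
  have hdense : ∀ n, Dense (G n) := by
    intro n
    rw [Metric.dense_iff]
    intro x ε hε
    have hpos : (0:ℝ) < 1 / (2 * (n + 1)) := by positivity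
    set δ := min ε (1 / (2 * (n + 1))) with hδ
    have hδpos : 0 < δ := lt_min hε hpos
    obtain ⟨y, hy, t, ht, hty⟩ := hnw x (ball x δ) (ball_mem_nhds x hδpos)
    refine ⟨y, ?_, t, ht, ?_⟩
    · exact mem_ball'.2 (lt_of_lt_of_le (mem_ball'.1 hy) (min_le_left _ _))
    · calc dist (F^[t] y) y ≤ dist (F^[t] y) x + dist x y := dist_triangle _ _ _
        _ < δ + δ := add_lt_add (mem_ball.1 hty) (mem_ball'.1 hy)
        _ ≤ 1 / (2 * (n + 1)) + 1 / (2 * (n + 1)) := by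
            have := min_le_right ε (1 / (2 * ((n:ℝ) + 1)))
            linarith
        _ = 1 / (n + 1) := by
            have h1 : ((n:ℝ) + 1) ≠ 0 := by positivity
            field_simp
            norm_num
  have hsub : (⋂ n, G n) ⊆ {x : X | ∀ U ∈ nhds x, ∃ t > 0, F^[t] x ∈ U} := by
    intro x hx U hU
    obtain ⟨ε, hε, hball⟩ := Metric.mem_nhds_iff.1 hU
    obtain ⟨n, hn⟩ := exists_nat_one_div_lt hε
    obtain ⟨t, ht, hd⟩ := mem_iInter.1 hx n
    exact ⟨t, ht, hball (mem_ball.2 (hd.trans hn))⟩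
  exact Filter.mem_of_superset
    ((countable_iInter_mem.mpr) fun n => residual_of_dense_open (hopen n) (hdense n)) hsub
end

section
/- A TDDS (Σ, F) with Σ ⊆ A^ℕ (A finite) is equicontinuous if and only if all of its traces τ_F^{[k]} are finite sets, where τ_F^{[k]} = { (F^t(x)|_{[0,k]})_{t∈ℕ} : x ∈ Σ }. -/
/-!
A distance below `2^{-k}` means agreement on the coordinates `0, …, k`, so equicontinuity says
exactly that for every `k` the trace map `x ↦ (F^t(x)|_{[0,k]})_t` is constant on all balls of
some radius `δ > 0`. On the compact space `Σ` this is the same as being locally constant, and a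
continuous map on a compact space is locally constant iff its range is finite.
-/

open Set

theorem IsLocallyConstant.of_continuous_of_finite_range {X Y : Type*} [TopologicalSpace X]
    [TopologicalSpace Y] [T1Space Y] {f : X → Y} (hf : Continuous f) (hfin : (range f).Finite) :
    IsLocallyConstant f :=
  haveI := hfin.to_subtype
  (IsLocallyConstant.of_discrete Subtype.val).comp_continuous hf.rangeFactorization

theorem isLocallyConstant_iff_exists_forall_dist_lt_imp_eq {X Y : Type*} [PseudoMetricSpace X]
    [CompactSpace X] {f : X → Y} :
    IsLocallyConstant f ↔ ∃ δ > 0, ∀ x y, dist x y < δ → f x = f y := by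
  constructor
  · intro hf
    obtain ⟨δ, hδ, hball⟩ := lebesgue_number_lemma_of_metric isCompact_univ
      (c := fun z => {x | f x = f z}) (fun z => hf.isOpen_fiber _)
      (fun x _ => mem_iUnion.2 ⟨x, rfl⟩)
    refine ⟨δ, hδ, fun x y hxy => ?_⟩
    obtain ⟨z, hz⟩ := hball x trivial
    exact (hz (Metric.mem_ball_self hδ)).trans (hz (Metric.mem_ball'.2 hxy)).symm
  · rintro ⟨δ, hδ, hf⟩
    refine (IsLocallyConstant.iff_eventually_eq f).2 fun x => ?_
    filter_upwards [Metric.ball_mem_nhds x hδ] with y hy using (hf x y (Metric.mem_ball'.1 hy)).symm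

namespace PiNat

attribute [local instance] PiNat.dist

theorem dist_lt_half_pow_iff {E : ℕ → Type*} {x y : ∀ n, E n} {k : ℕ} :
    dist x y < (1 / 2) ^ k ↔ ∀ i ≤ k, x i = y i := by
  refine ⟨fun h i hi => apply_eq_of_dist_lt h hi, fun h => ?_⟩
  have hcyl : x ∈ cylinder y (k + 1) := fun i hi => h i (Nat.lt_succ_iff.1 hi)
  calc dist x y ≤ (1 / 2) ^ (k + 1) := mem_cylinder_iff_dist_le.1 hcyl
    _ < (1 / 2) ^ k := pow_lt_pow_right_of_lt_one₀ (by norm_num) (by norm_num) k.lt_succ_self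

end PiNat

section Trace

variable {A : Type*} {S : Set (ℕ → A)}

def trace (F : S → S) (k : ℕ) (x : S) : ℕ → Fin (k + 1) → A :=
  fun t i => (F^[t] x).1 i

theorem continuous_trace [TopologicalSpace A] {F : S → S} (hF : Continuous F) (k : ℕ) :
    Continuous (trace F k) :=
  continuous_pi fun t => continuous_pi fun i =>
    (continuous_apply (i : ℕ)).comp (continuous_subtype_val.comp (hF.iterate t))

attribute [local instance] PiNat.metricSpace

variable [TopologicalSpace A] [DiscreteTopology A]

theorem trace_eq_trace_iff {F : S → S} {k : ℕ} {x y : S} :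
    trace F k x = trace F k y ↔ ∀ t, dist (F^[t] x) (F^[t] y) < (1 / 2) ^ k := by
  simp only [trace, funext_iff, Fin.forall_iff, Nat.lt_succ_iff, Subtype.dist_eq,
    PiNat.dist_lt_half_pow_iff]

theorem forall_dist_iterate_lt_iff_forall_trace_eq {F : S → S} :
    (∀ ε > (0 : ℝ), ∃ δ > (0 : ℝ), ∀ x y : S, dist x y < δ → ∀ t, dist (F^[t] x) (F^[t] y) < ε) ↔
      ∀ k, ∃ δ > (0 : ℝ), ∀ x y : S, dist x y < δ → trace F k x = trace F k y := by
  simp only [trace_eq_trace_iff]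
  constructor
  · exact fun h k => h _ (by positivity)
  · intro h ε hε
    obtain ⟨k, hk⟩ := exists_pow_lt_of_lt_one hε (by norm_num : (1 / 2 : ℝ) < 1)
    obtain ⟨δ, hδ, hxy⟩ := h k
    exact ⟨δ, hδ, fun x y hd t => (hxy x y hd t).trans hk⟩

end Trace

/-- A TDDS on a closed subset of `A^ℕ` (with the distance `d(x,y) = 2^{-min{i : x i ≠ y i}}`,
given by `PiNat.dist`) is equicontinuous iff all of its traces are finite. -/
theorem stmt2 {A : Type*} [Fintype A] [TopologicalSpace A] [DiscreteTopology A]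
    (S : Set (ℕ → A)) (hclosed : IsClosed S)
    (F : S → S) (hF : Continuous F) :
    (∀ ε > (0 : ℝ), ∃ δ > (0 : ℝ), ∀ x y : S,
        (PiNat.dist : Dist (ℕ → A)).dist x.1 y.1 < δ →
          ∀ t : ℕ, (PiNat.dist : Dist (ℕ → A)).dist (F^[t] x).1 (F^[t] y).1 < ε)
      ↔ ∀ k : ℕ,
          (Set.range (fun x : S => fun t : ℕ => fun i : Fin (k + 1) => (F^[t] x).1 i)).Finite := by
  let : MetricSpace (ℕ → A) := PiNat.metricSpace
  have : CompactSpace S := isCompact_iff_compactSpace.1 hclosed.isCompact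
  refine (forall_dist_iterate_lt_iff_forall_trace_eq (F := F)).trans (forall_congr' fun k => ?_)
  rw [← isLocallyConstant_iff_exists_forall_dist_lt_imp_eq]
  exact ⟨IsLocallyConstant.range_finite,
    IsLocallyConstant.of_continuous_of_finite_range (continuous_trace hF k)⟩
end

section
/- If a TDDS (Σ, F) is ε-sensitive with ε ≥ 2^{-k}, then its trace subshift τ_F^{[k]} is a sensitive subshift under the shift map. -/
open scoped Classical

/-- If a TDDS on `Σ ⊆ A^ℕ` is `ε`-sensitive with `ε ≥ 2^{-k}`, then its trace subshift of
width `k+1` is sensitive for the shift map.  Distances are the canonical ones on product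
spaces over `ℕ` (`PiNat.dist`, i.e. `d(x,y) = 2^{-min{i : x i ≠ y i}}`). -/
theorem stmt3 {A : Type*} [Fintype A] [TopologicalSpace A] [DiscreteTopology A]
    (S : Set (ℕ → A)) (hclosed : IsClosed S)
    (F : S → S) (hF : Continuous F)
    (k : ℕ) (ε : ℝ) (hε : ((1 : ℝ) / 2) ^ k ≤ ε)
    (hsens : ∀ x : S, ∀ δ > (0 : ℝ), ∃ y : S,
      (PiNat.dist : Dist (ℕ → A)).dist x.1 y.1 < δ ∧
        ∃ t : ℕ, ε < (PiNat.dist : Dist (ℕ → A)).dist (F^[t] x).1 (F^[t] y).1) :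
    ∃ ε' > (0 : ℝ),
      ∀ z ∈ Set.range (fun x : S => fun t : ℕ => fun i : Fin (k + 1) => (F^[t] x).1 i),
        ∀ δ > (0 : ℝ),
          ∃ w ∈ Set.range (fun x : S => fun t : ℕ => fun i : Fin (k + 1) => (F^[t] x).1 i),
            (PiNat.dist : Dist (ℕ → (Fin (k + 1) → A))).dist z w < δ ∧
              ∃ t : ℕ, ε' < (PiNat.dist : Dist (ℕ → (Fin (k + 1) → A))).dist
                (fun n => z (n + t)) (fun n => w (n + t)) := by
  letI : Dist (ℕ → A) := PiNat.dist
  letI : Dist (ℕ → (Fin (k + 1) → A)) := PiNat.dist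
  set T : S → ℕ → Fin (k + 1) → A := fun x t i => (F^[t] x).1 i with hT
  refine ⟨1 / 2, by norm_num, ?_⟩
  rintro z ⟨x, rfl⟩ δ hδ
  obtain ⟨m, hm⟩ : ∃ m : ℕ, (1 / 2 : ℝ) ^ m < δ :=
    exists_pow_lt_of_lt_one hδ one_half_lt_one
  -- the set of points whose trace agrees with that of `x` up to time `m` is open in `S`
  have hWopen : IsOpen {y : S | ∀ t < m, T y t = T x t} := by
    have heq : {y : S | ∀ t < m, T y t = T x t}
        = ⋂ t ∈ Finset.range m, (fun y => T y t) ⁻¹' {T x t} := by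
      ext y; simp
    rw [heq]
    refine isOpen_biInter_finset fun t _ => ?_
    have hc : Continuous fun y : S => T y t := by
      refine continuous_pi fun i => ?_
      exact (continuous_apply (i : ℕ)).comp (continuous_subtype_val.comp (hF.iterate t))
    exact (isOpen_discrete _).preimage hc
  obtain ⟨V, hVopen, hVeq⟩ := isOpen_induced_iff.1 hWopen
  have hxV : x.1 ∈ V := by
    have hxW : x ∈ {y : S | ∀ t < m, T y t = T x t} := fun t _ => rfl
    rw [← hVeq] at hxW
    exact hxW
  obtain ⟨δ', hδ'pos, hδ'⟩ := (PiNat.isOpen_iff_dist V).1 hVopen x.1 hxV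
  obtain ⟨y, hxy, t, ht⟩ := hsens x δ' hδ'pos
  have hyW : ∀ s < m, T y s = T x s := by
    have : y ∈ Subtype.val ⁻¹' V := hδ' y.1 hxy
    rw [hVeq] at this
    exact this
  refine ⟨T y, ⟨y, rfl⟩, ?_, t, ?_⟩
  · -- dist (T x) (T y) < δ
    rcases eq_or_ne (T x) (T y) with h | h
    · rw [← h, PiNat.dist_self]; exact hδ
    · calc dist (T x) (T y) ≤ (1 / 2 : ℝ) ^ m := by
            rw [PiNat.dist_comm]
            exact PiNat.mem_cylinder_iff_dist_le.1 (fun s hs => hyW s hs)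
        _ < δ := hm
  · -- separation of the shifted traces
    have hne : (F^[t] x).1 ≠ (F^[t] y).1 := by
      intro h
      rw [h, PiNat.dist_self] at ht
      have : (0 : ℝ) < ε := lt_of_lt_of_le (by positivity) hε
      linarith
    set j := PiNat.firstDiff (F^[t] x).1 (F^[t] y).1 with hj
    have hdist : dist (F^[t] x).1 (F^[t] y).1 = (1 / 2 : ℝ) ^ j := PiNat.dist_eq_of_ne hne
    have hjk : j < k := by
      have h1 : ((1 : ℝ) / 2) ^ k < ((1 : ℝ) / 2) ^ j := by
        rw [← hdist]; exact lt_of_le_of_lt hε ht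
      exact (pow_lt_pow_iff_right_of_lt_one₀ (by norm_num) (by norm_num)).1 h1
    have hij : (F^[t] x).1 j ≠ (F^[t] y).1 j := PiNat.apply_firstDiff_ne hne
    have hne0 : T x t ≠ T y t := by
      intro h
      exact hij (congrFun h ⟨j, by omega⟩)
    have hne2 : (fun n => T x (n + t)) ≠ (fun n => T y (n + t)) := by
      intro h
      have := congrFun h 0
      simp only [Nat.zero_add] at this
      exact hne0 this
    have hfd : PiNat.firstDiff (fun n => T x (n + t)) (fun n => T y (n + t)) = 0 := by
      by_contra h
      have h0 : T x (0 + t) = T y (0 + t) :=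
        @PiNat.apply_eq_of_lt_firstDiff _ (fun n => T x (n + t)) (fun n => T y (n + t)) 0
          (Nat.pos_of_ne_zero h)
      simp only [Nat.zero_add] at h0
      exact hne0 h0
    have : dist (fun n => T x (n + t)) (fun n => T y (n + t)) = 1 := by
      rw [PiNat.dist_eq_of_ne hne2, hfd, pow_zero]
    rw [show ((PiNat.dist : Dist (ℕ → (Fin (k + 1) → A))).dist
        (fun n => T x (n + t)) (fun n => T y (n + t)))
        = dist (fun n => T x (n + t)) (fun n => T y (n + t)) from rfl, this]
    norm_num
end

section
/- Any weakly nilpotent cellular automaton on A^ℤ is nilpotent: if every configuration x satisfies F^t(x) = z for all sufficiently large t (for a fixed configuration z), then there exists q such that F^q(A^ℤ) = {z}. -/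
/-!
By Baire's theorem one of the closed sets `{x | F^[q] x = z}` contains a cylinder. Since `F^[q]`
commutes with the shift and `z` is shift-invariant, every shifted copy of that cylinder is mapped
to `z` as well. The coordinate `F^[q] v 0` depends on a finite window only, so placing a shifted
copy of the cylinder away from this window shows `F^[q] v 0 = z 0` for every `v`; shifting again
gives `F^[q] v = z`.
-/

open Function Filter Topology

theorem exists_finset_setOf_forall_eq_subset {ι A : Type*} [TopologicalSpace A]
    [DiscreteTopology A] {x : ι → A} {U : Set (ι → A)} (hU : U ∈ 𝓝 x) :
    ∃ I : Finset ι, {y | ∀ i ∈ I, y i = x i} ⊆ U := by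
  rw [nhds_pi, mem_pi'] at hU
  obtain ⟨I, t, ht, hIt⟩ := hU
  refine ⟨I, fun y hy => hIt fun i hi => ?_⟩
  rw [hy i hi]
  simpa [nhds_discrete] using ht i

theorem Continuous.exists_finset_dependsOn {ι A B : Type*} [TopologicalSpace A]
    [DiscreteTopology A] [Finite A] [TopologicalSpace B] [DiscreteTopology B]
    {f : (ι → A) → B} (hf : Continuous f) : ∃ R : Finset ι, DependsOn f R := by
  classical
  have hlocal (w : ι → A) : ∃ S : Finset ι, {v | ∀ i ∈ S, v i = w i} ⊆ f ⁻¹' {f w} :=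
    exists_finset_setOf_forall_eq_subset <|
      (isOpen_discrete _).preimage hf |>.mem_nhds rfl
  choose S hS using hlocal
  obtain ⟨t, ht⟩ := isCompact_univ.elim_finite_subcover
    (fun w => (S w : Set ι).pi fun i => {w i})
    (fun w => isOpen_set_pi (S w).finite_toSet fun _ _ => isOpen_discrete _)
    (fun v _ => Set.mem_iUnion.2 ⟨v, fun _ _ => rfl⟩)
  refine ⟨t.biUnion S, fun u v huv => ?_⟩
  obtain ⟨w, hwt, hu⟩ := Set.mem_iUnion₂.1 (ht (Set.mem_univ u))
  have hv : ∀ i ∈ S w, v i = w i := fun i hi =>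
    (huv i (Finset.mem_biUnion.2 ⟨w, hwt, hi⟩)).symm.trans (hu i hi)
  exact (hS w hu).trans (hS w hv).symm

namespace FullShift

variable {A : Type*}

def shift (k : ℤ) (x : ℤ → A) : ℤ → A := fun i => x (i + k)

theorem shift_zero : shift (A := A) 0 = id := by
  funext x i
  simp [shift]

theorem shift_add (k l : ℤ) : shift (A := A) (k + l) = shift k ∘ shift l := by
  funext x i
  simp [shift, add_assoc]

theorem shift_shift_neg (k : ℤ) (x : ℤ → A) : shift k (shift (-k) x) = x := by
  rw [← comp_apply (f := shift k), ← shift_add, add_neg_cancel, shift_zero, id]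

theorem shift_injective (k : ℤ) : Injective (shift (A := A) k) := fun x y hxy => by
  rw [← shift_shift_neg (-k) x, ← shift_shift_neg (-k) y, neg_neg, hxy]

theorem commute_shift_neg {F : (ℤ → A) → (ℤ → A)} {k : ℤ} (h : Function.Commute F (shift k)) :
    Function.Commute F (shift (-k)) := fun x =>
  shift_injective k <| by rw [← h, shift_shift_neg, shift_shift_neg]

theorem commute_shift_of_commute_shift_one {F : (ℤ → A) → (ℤ → A)}
    (h : Function.Commute F (shift 1)) (k : ℤ) : Function.Commute F (shift k) := by
  induction k using Int.induction_on with
  | zero => rw [shift_zero]; exact Commute.id_right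
  | succ n ih => rw [shift_add]; exact ih.comp_right h
  | pred n ih => rw [sub_eq_add_neg, shift_add]; exact ih.comp_right (commute_shift_neg h)

theorem shift_eq_of_forall_exists_iterate_eq {F : (ℤ → A) → (ℤ → A)}
    (hF : ∀ k, Function.Commute F (shift k)) {z : ℤ → A} (h : ∀ x, ∃ q : ℕ, ∀ t ≥ q, F^[t] x = z)
    (k : ℤ) : shift k z = z := by
  obtain ⟨q₁, hq₁⟩ := h z
  obtain ⟨q₂, hq₂⟩ := h (shift k z)
  calc shift k z = shift k (F^[max q₁ q₂] z) := by rw [hq₁ _ (le_max_left _ _)]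
    _ = F^[max q₁ q₂] (shift k z) := ((hF k).iterate_left _ z).symm
    _ = z := hq₂ _ (le_max_right _ _)

theorem eq_of_forall_eq_on_cylinder [TopologicalSpace A] [DiscreteTopology A] [Finite A]
    {G : (ℤ → A) → (ℤ → A)} (hG : Continuous G) (hcomm : ∀ k, Function.Commute G (shift k))
    {z : ℤ → A} (hz : ∀ k, shift k z = z) {x : ℤ → A} {I : Finset ℤ}
    (hI : ∀ y, (∀ i ∈ I, y i = x i) → G y = z) (v : ℤ → A) : G v = z := by
  classical
  obtain ⟨R, hR⟩ := ((continuous_apply 0).comp hG).exists_finset_dependsOn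
  obtain ⟨k, hk⟩ := Infinite.exists_notMem_finset (Finset.image₂ (· - ·) R I)
  have at_zero (v : ℤ → A) : G v 0 = z 0 := by
    -- `w` agrees with `v` on `R` and carries a copy of the cylinder translated by `k`.
    let w : ℤ → A := fun m => if m - k ∈ I then x (m - k) else v m
    have hw : G w = z := shift_injective k <| by
      rw [← hcomm k w, hz k]
      exact hI _ fun i hi => by simp [w, shift, hi]
    have hvw : G v 0 = G w 0 := hR fun r hr => by
      have hrk : r - k ∉ I := fun hrk =>
        hk (Finset.mem_image₂.2 ⟨r, hr, r - k, hrk, sub_sub_cancel r k⟩)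
      simp [w, hrk]
    rw [hvw, hw]
  funext j
  calc G v j = G (shift j v) 0 := by simp [hcomm j v, shift]
    _ = z 0 := at_zero _
    _ = z j := by simpa [shift] using (congrFun (hz j) 0).symm

end FullShift

open FullShift

theorem stmt4_general {A : Type*} [Fintype A] [TopologicalSpace A] [DiscreteTopology A]
    (F : (ℤ → A) → (ℤ → A)) (hF : Continuous F)
    (hcomm : ∀ x : ℤ → A, F (fun i => x (i + 1)) = fun i => F x (i + 1))
    (z : ℤ → A) (h : ∀ x : ℤ → A, ∃ q : ℕ, ∀ t ≥ q, F^[t] x = z) :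
    ∃ q : ℕ, F^[q] '' Set.univ = {z} := by
  have : Nonempty (ℤ → A) := ⟨z⟩
  have hshift : ∀ k, Function.Commute F (shift k) := commute_shift_of_commute_shift_one hcomm
  obtain ⟨q, x, hx⟩ := nonempty_interior_of_iUnion_of_closed
    (fun q => isClosed_singleton.preimage (hF.iterate q))
    (Set.eq_univ_of_forall fun x => Set.mem_iUnion.2 <|
      (h x).imp fun q hq => Set.mem_singleton_iff.2 (hq q le_rfl))
  obtain ⟨I, hI⟩ := exists_finset_setOf_forall_eq_subset (isOpen_interior.mem_nhds hx)
  have hall : ∀ v, F^[q] v = z :=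
    eq_of_forall_eq_on_cylinder (hF.iterate q) (fun k => (hshift k).iterate_left q)
      (shift_eq_of_forall_exists_iterate_eq hshift h)
      fun _ hy => interior_subset (s := F^[q] ⁻¹' {z}) (hI hy)
  exact ⟨q, Set.eq_singleton_iff_unique_mem.2
    ⟨⟨z, trivial, hall z⟩, fun _ ⟨y, _, hy⟩ => hy ▸ hall y⟩⟩

/-- Any weakly nilpotent cellular automaton on `A^ℤ` is nilpotent. -/
theorem stmt4 {A : Type*} [Fintype A] [Nonempty A] [TopologicalSpace A] [DiscreteTopology A]
    (F : (ℤ → A) → (ℤ → A)) (hF : Continuous F)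
    (hcomm : ∀ x : ℤ → A, F (fun i => x (i + 1)) = fun i => F x (i + 1))
    (z : ℤ → A) (h : ∀ x : ℤ → A, ∃ q : ℕ, ∀ t ≥ q, F^[t] x = z) :
    ∃ q : ℕ, F^[q] '' Set.univ = {z} :=
  stmt4_general F hF hcomm z h
end

section
/- Any weakly preperiodic cellular automaton on A^ℤ is preperiodic: if for every configuration x there exist p ≥ 1 and q with F^{p+q}(x) = F^q(x), then there exist uniform P ≥ 1 and Q with F^{P+Q} = F^Q. -/
/-!
The sets `C p q = {x | F^[p + 1 + q] x = F^[q] x}` are closed, invariant under the shift, and by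
hypothesis they cover the compact space `A^ℤ`. By Baire's theorem one of them has nonempty
interior. The full shift is transitive, so a closed shift-invariant set with nonempty interior is
everything; hence `F^[p + 1 + q] = F^[q]`.
-/

open Set Topology

namespace CellularAutomaton

variable {A : Type*}

def shift (x : ℤ → A) : ℤ → A := fun i => x (i + 1)

theorem iterate_shift_apply (n : ℕ) (x : ℤ → A) (i : ℤ) : shift^[n] x i = x (i + n) := by
  induction n generalizing x with
  | zero => simp
  | succ n ih =>
    rw [Function.iterate_succ_apply, ih]
    simp only [shift, Nat.cast_succ, add_assoc]

theorem exists_forall_add_notMem_of_finite {I J : Set ℤ} (hI : I.Finite) (hJ : J.Finite) :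
    ∃ n : ℕ, ∀ i ∈ J, i + n ∉ I := by
  have hbad : {n : ℕ | ∃ i ∈ J, i + n ∈ I}.Finite := by
    refine ((hJ.biUnion fun i _ => (hI.vsub (finite_singleton i))).preimage
      Nat.cast_injective.injOn).subset ?_
    rintro n ⟨i, hi, hin⟩
    exact mem_iUnion₂.mpr ⟨i, hi, i + n, hin, i, rfl, by simp⟩
  obtain ⟨n, hn⟩ := hbad.infinite_compl.nonempty
  exact ⟨n, fun i hi hin => hn ⟨i, hi, hin⟩⟩

theorem mapsTo_shift_setOf_iterate_eq {F : (ℤ → A) → (ℤ → A)} (hF : Function.Commute F shift)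
    (m n : ℕ) : MapsTo shift {x | F^[m] x = F^[n] x} {x | F^[m] x = F^[n] x} := fun x hx => by
  change F^[m] (shift x) = F^[n] (shift x)
  rw [(hF.iterate_left m).eq, (hF.iterate_left n).eq, show F^[m] x = F^[n] x from hx]

variable [TopologicalSpace A]

/-- Topological transitivity of the full shift. -/
theorem exists_mem_iterate_shift_mem {x z : ℤ → A} {U V : Set (ℤ → A)} (hU : U ∈ 𝓝 x)
    (hV : V ∈ 𝓝 z) : ∃ y ∈ U, ∃ n : ℕ, shift^[n] y ∈ V := by
  rw [nhds_pi, Filter.mem_pi] at hU hV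
  obtain ⟨I, hI, s, hs, hsU⟩ := hU
  obtain ⟨J, hJ, t, ht, htV⟩ := hV
  obtain ⟨n, hn⟩ := exists_forall_add_notMem_of_finite hI hJ
  classical
  let y : ℤ → A := fun i => if i ∈ I then x i else z (i - n)
  refine ⟨y, hsU fun i hi => ?_, n, htV fun i hi => ?_⟩
  · simpa [y, hi] using mem_of_mem_nhds (hs i)
  · simpa [iterate_shift_apply, y, hn i hi] using mem_of_mem_nhds (ht i)

theorem eq_univ_of_mapsTo_shift {S : Set (ℤ → A)} (hS : IsClosed S) (hσ : MapsTo shift S S)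
    (hint : (interior S).Nonempty) : S = univ := by
  obtain ⟨x, hx⟩ := hint
  refine eq_univ_of_forall fun z => hS.closure_subset (mem_closure_iff_nhds.mpr fun V hV => ?_)
  obtain ⟨y, hyS, n, hnV⟩ := exists_mem_iterate_shift_mem (mem_interior_iff_mem_nhds.mp hx) hV
  exact ⟨_, hnV, hσ.iterate n hyS⟩

end CellularAutomaton

open CellularAutomaton in
/-- Any weakly preperiodic cellular automaton on `A^ℤ` is preperiodic. -/
theorem stmt5 {A : Type*} [Fintype A] [Nonempty A] [TopologicalSpace A] [DiscreteTopology A]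
    (F : (ℤ → A) → (ℤ → A)) (hF : Continuous F)
    (hcomm : ∀ x : ℤ → A, F (fun i => x (i + 1)) = fun i => F x (i + 1))
    (h : ∀ x : ℤ → A, ∃ p ≥ 1, ∃ q : ℕ, F^[p + q] x = F^[q] x) :
    ∃ P ≥ 1, ∃ Q : ℕ, F^[P + Q] = F^[Q] := by
  let C : ℕ × ℕ → Set (ℤ → A) := fun pq => {x | F^[pq.1 + 1 + pq.2] x = F^[pq.2] x}
  have hclosed (pq : ℕ × ℕ) : IsClosed (C pq) := isClosed_eq (hF.iterate _) (hF.iterate _)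
  have hcover : ⋃ pq, C pq = univ := eq_univ_of_forall fun x => by
    obtain ⟨p, hp, q, hpq⟩ := h x
    exact mem_iUnion.mpr ⟨(p - 1, q), by simpa [C, Nat.sub_add_cancel hp] using hpq⟩
  obtain ⟨⟨p, q⟩, hint⟩ := nonempty_interior_of_iUnion_of_closed hclosed hcover
  have hall : C (p, q) = univ :=
    eq_univ_of_mapsTo_shift (hclosed _) (mapsTo_shift_setOf_iterate_eq hcomm _ _) hint
  exact ⟨p + 1, by omega, q, funext (eq_univ_iff_forall.mp hall)⟩
end

section
/- Any limit-nilpotent DDS is equicontinuous: if the limit set Ω_F = ∩_{j∈ℕ} F^j(X) is a singleton {z}, then F is equicontinuous. -/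
/-!
The images `F^[n](X)` form a decreasing sequence of compact sets, so by compactness they
eventually enter every neighbourhood of their intersection `{z}`: the iterates converge to the
constant map `z` uniformly on `X`. A uniform limit of a sequence of uniformly continuous maps is
uniformly equicontinuous, and every iterate is uniformly continuous on the compact space `X`.
-/

open Filter Topology Set Function

theorem Function.antitone_range_iterate {α : Type*} (F : α → α) :
    Antitone fun n => range F^[n] := by
  intro m n hmn
  dsimp only
  rw [← Nat.add_sub_cancel' hmn, iterate_add]
  exact range_comp_subset_range _ _

theorem eventually_range_iterate_subset {X : Type*} [TopologicalSpace X] [CompactSpace X]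
    [T2Space X] {F : X → X} (hF : Continuous F) {U : Set X}
    (hU : ∀ x ∈ ⋂ n, range F^[n], U ∈ 𝓝 x) : ∀ᶠ n in atTop, range F^[n] ⊆ U := by
  obtain ⟨N, hN⟩ := exists_subset_nhds_of_isCompact (antitone_range_iterate F).directed_ge
    (fun n => isCompact_range (hF.iterate n)) hU
  filter_upwards [eventually_ge_atTop N] with n hn
  exact (antitone_range_iterate F hn).trans hN

theorem tendstoUniformly_iterate_of_iInter_range_iterate_eq_singleton {X : Type*}
    [UniformSpace X] [CompactSpace X] [T2Space X] {F : X → X} (hF : Continuous F) {z : X}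
    (h : ⋂ n, range F^[n] = {z}) :
    TendstoUniformly (fun n => F^[n]) (fun _ => z) atTop := by
  intro u hu
  have hnhds : ∀ x ∈ ⋂ n, range F^[n], {y | (z, y) ∈ u} ∈ 𝓝 x := by
    intro x hx
    rw [h, mem_singleton_iff] at hx
    exact hx ▸ mem_nhds_left z hu
  filter_upwards [eventually_range_iterate_subset hF hnhds] with n hn x
  exact hn (mem_range_self x)

theorem TendstoUniformly.uniformEquicontinuous {α β : Type*} [UniformSpace α]
    [PseudoMetricSpace β] {f : ℕ → α → β} {g : α → β} (hfg : TendstoUniformly f g atTop)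
    (hf : ∀ n, UniformContinuous (f n)) (hg : UniformContinuous g) :
    UniformEquicontinuous f := by
  rw [Metric.uniformEquicontinuous_iff_right]
  intro ε hε
  obtain ⟨N, hN⟩ :=
    (Metric.tendstoUniformly_iff.mp hfg (ε / 3) (by positivity)).exists_forall_of_atTop
  have hfin : UniformEquicontinuous fun n : Fin N => f n :=
    uniformEquicontinuous_finite.mpr fun n => hf n
  filter_upwards [Metric.uniformEquicontinuous_iff_right.mp hfin ε hε,
    hg (Metric.dist_mem_uniformity (by positivity : 0 < ε / 3))] with xy hsmall hgxy n
  obtain ⟨x, y⟩ := xy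
  rcases lt_or_ge n N with hn | hn
  · exact hsmall ⟨n, hn⟩
  · calc dist (f n x) (f n y) ≤ dist (f n x) (g x) + dist (g x) (g y) + dist (g y) (f n y) :=
          dist_triangle4 _ _ _ _
      _ < ε / 3 + ε / 3 + ε / 3 := by
          gcongr
          · exact dist_comm (g x) _ ▸ hN n hn x
          · exact hgxy
          · exact hN n hn y
      _ = ε := by ring

/-- Any limit-nilpotent DDS is equicontinuous. -/
theorem stmt6 {X : Type*} [MetricSpace X] [CompactSpace X] (F : X → X) (hF : Continuous F)
    (z : X) (h : (⋂ j : ℕ, F^[j] '' Set.univ) = {z}) :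
    ∀ ε > (0 : ℝ), ∃ δ > (0 : ℝ), ∀ x y : X, dist x y < δ →
      ∀ t : ℕ, dist (F^[t] x) (F^[t] y) < ε := by
  simp only [image_univ] at h
  have hconv := tendstoUniformly_iterate_of_iInter_range_iterate_eq_singleton hF h
  exact Metric.uniformEquicontinuous_iff.mp <| hconv.uniformEquicontinuous
    (fun n => CompactSpace.uniformContinuous_of_continuous (hF.iterate n)) uniformContinuous_const
end

section
/- Any onesided subshift whose limit set Ω_Σ = ⋂_{j∈ℕ} σ^j(Σ) is a subshift of finite type is stable: there exists t ∈ ℕ with σ^t(Σ) = Ω_Σ. -/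
/-- The onesided shift map. -/
def shiftN {A : Type*} (x : ℕ → A) : ℕ → A := fun i => x (i + 1)

lemma shiftN_iterate {A : Type*} (i : ℕ) (x : ℕ → A) (n : ℕ) :
    shiftN^[i] x n = x (n + i) := by
  induction i generalizing x n with
  | zero => simp
  | succ i ih =>
    rw [Function.iterate_succ_apply, ih]
    simp [shiftN, Nat.add_assoc]

lemma continuous_shiftN {A : Type*} [TopologicalSpace A] :
    Continuous (shiftN : (ℕ → A) → ℕ → A) :=
  continuous_pi fun i => continuous_apply (i + 1)

/-- Any onesided subshift whose limit set is an SFT is stable. -/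
theorem stmt10 {A : Type*} [Fintype A] [TopologicalSpace A] [DiscreteTopology A]
    (S : Set (ℕ → A)) (hclosed : IsClosed S) (hinv : ∀ x ∈ S, shiftN x ∈ S)
    (hSFT : ∃ (k : ℕ) (Forb : Set (Fin k → A)),
      (⋂ j : ℕ, shiftN^[j] '' S)
        = {x : ℕ → A | ∀ i : ℕ, (fun m : Fin k => x (i + m)) ∉ Forb}) :
    ∃ t : ℕ, shiftN^[t] '' S = ⋂ j : ℕ, shiftN^[j] '' S := by
  classical
  obtain ⟨k, Forb, hΩ⟩ := hSFT
  set C : ℕ → Set (ℕ → A) := fun j => shiftN^[j] '' S with hC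
  have hcont : ∀ j, Continuous (shiftN^[j] : (ℕ → A) → ℕ → A) := fun j =>
    continuous_shiftN.iterate j
  have hCclosed : ∀ j, IsClosed (C j) := fun j =>
    (hclosed.isCompact.image (hcont j)).isClosed
  have hanti : Antitone C := by
    apply antitone_nat_of_succ_le
    rintro j x ⟨y, hy, rfl⟩
    rw [Function.iterate_succ_apply]
    exact ⟨shiftN y, hinv y hy, rfl⟩
  set W : ℕ → (Fin k → A) → Prop :=
    fun j w => ∃ x ∈ C j, ∀ m : Fin k, x (m : ℕ) = w m with hW
  have hWanti : ∀ {j j' : ℕ}, j ≤ j' → ∀ w, W j' w → W j w := by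
    rintro j j' h w ⟨x, hx, hpre⟩
    exact ⟨x, hanti h hx, hpre⟩
  have keyA : ∀ w : Fin k → A, (∀ j, W j w) → w ∉ Forb := by
    intro w hw
    set D : ℕ → Set (ℕ → A) := fun j => C j ∩ {x | ∀ m : Fin k, x (m : ℕ) = w m} with hD
    have hDclosed : ∀ j, IsClosed (D j) := by
      intro j
      refine (hCclosed j).inter ?_
      have : {x : ℕ → A | ∀ m : Fin k, x (m : ℕ) = w m}
          = ⋂ m : Fin k, (fun x : ℕ → A => x (m : ℕ)) ⁻¹' {w m} := by
        ext x; simp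
      rw [this]
      exact isClosed_iInter fun m =>
        (isClosed_singleton).preimage (continuous_apply _)
    have hDne : ∀ j, (D j).Nonempty := by
      intro j
      obtain ⟨x, hx, hpre⟩ := hw j
      exact ⟨x, hx, hpre⟩
    have hDanti : ∀ j, D (j + 1) ⊆ D j := fun j x hx =>
      ⟨hanti (Nat.le_succ j) hx.1, hx.2⟩
    obtain ⟨x, hx⟩ := IsCompact.nonempty_iInter_of_sequence_nonempty_isCompact_isClosed
      D hDanti hDne ((hDclosed 0).isCompact) hDclosed
    have hxΩ : x ∈ ⋂ j : ℕ, shiftN^[j] '' S := by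
      refine Set.mem_iInter.mpr fun j => ?_
      exact (Set.mem_iInter.mp hx j).1
    have hxpre : ∀ m : Fin k, x (m : ℕ) = w m := (Set.mem_iInter.mp hx 0).2
    rw [hΩ] at hxΩ
    have := hxΩ 0
    simpa [hxpre] using this
  set f : (Fin k → A) → ℕ := fun w =>
    if h : ∀ j, W j w then 0 else Classical.choose (not_forall.mp h) with hf
  set t : ℕ := Finset.univ.sup f with ht
  refine ⟨t, Set.Subset.antisymm ?_ (Set.iInter_subset _ t)⟩
  intro x hx
  rw [hΩ]
  intro i
  set w : Fin k → A := fun m => x (i + m) with hw'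
  have hWti : W (i + t) w := by
    obtain ⟨y, hy, rfl⟩ := hx
    refine ⟨shiftN^[i + t] y, ⟨y, hy, rfl⟩, fun m => ?_⟩
    rw [shiftN_iterate, hw']
    show y ((m : ℕ) + (i + t)) = shiftN^[t] y (i + (m : ℕ))
    rw [shiftN_iterate]
    congr 1
    omega
  have hall : ∀ j, W j w := by
    by_contra h
    have hfw : ¬ W (f w) w := by
      rw [hf]
      simp only [h, dif_neg, not_false_iff]
      exact Classical.choose_spec (not_forall.mp h)
    exact hfw (hWanti (le_trans (Finset.le_sup (Finset.mem_univ w)) (Nat.le_add_left t i)) w hWti)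
  exact keyA w hall
end

section
/- A cellular automaton F on A^ℤ is nilpotent if and only if its limit set Ω_F = ⋂_{j∈ℕ} F^j(A^ℤ) is a singleton. -/
/-!
The images `F^[t] '' univ` decrease in `t`, so if they are eventually `{z}` then so is their
intersection. Conversely, if the limit set is `{z}`, it lies in the open cylinder of
configurations whose `0`-th cell is `z 0`; by compactness some image `F^[q] '' univ`, and hence
every later one, already lies in that cylinder. These images are shift-invariant, so all of their
points agree in every cell, and each of them, containing `z`, is `{z}`.
-/

open Set Function

section LimitSet

variable {X : Type*}

theorem antitone_iterate_image_univ (f : X → X) : Antitone fun n : ℕ => f^[n] '' univ := by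
  intro m n hmn
  obtain ⟨k, rfl⟩ := Nat.exists_eq_add_of_le hmn
  dsimp only
  rw [iterate_add, image_comp]
  exact image_mono (subset_univ _)

theorem iInter_iterate_image_univ_eq_of_eventually_eq {f : X → X} {z : X} {q : ℕ}
    (h : ∀ t ≥ q, f^[t] '' univ = {z}) : ⋂ j : ℕ, f^[j] '' univ = {z} := by
  rw [← (antitone_iterate_image_univ f).iInter_nat_add q]
  simp only [h _ (Nat.le_add_left q _), iInter_const]

theorem exists_iterate_image_univ_subset_of_iInter_subset [TopologicalSpace X] [CompactSpace X]
    [T2Space X] {f : X → X} (hf : Continuous f) {U : Set X} (hU : IsOpen U)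
    (hΩ : ⋂ j : ℕ, f^[j] '' univ ⊆ U) : ∃ q : ℕ, f^[q] '' univ ⊆ U := by
  have hcompact (j : ℕ) : IsCompact (f^[j] '' univ) := isCompact_univ.image (hf.iterate j)
  exact exists_subset_nhds_of_isCompact' (antitone_iterate_image_univ f).directed_ge hcompact
    (fun j => (hcompact j).isClosed) fun x hx => hU.mem_nhds (hΩ hx)

theorem Function.Commute.mapsTo_iterate_image_univ {f g : X → X} (h : Function.Commute f g)
    (n : ℕ) : MapsTo g (f^[n] '' univ) (f^[n] '' univ) := by
  rintro _ ⟨y, -, rfl⟩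
  exact ⟨g y, trivial, (h.iterate_left n).eq y⟩

end LimitSet

section Shift

variable {A : Type*}

def shift (n : ℤ) (x : ℤ → A) : ℤ → A := fun i => x (i + n)

theorem shift_zero : shift 0 = (id : (ℤ → A) → ℤ → A) := by
  funext x i
  simp [shift]

theorem shift_add (m n : ℤ) : shift (m + n) = (shift m ∘ shift n : (ℤ → A) → ℤ → A) := by
  funext x i
  simp [shift, add_assoc]

theorem commute_shift_of_commute_shift_one {F : (ℤ → A) → ℤ → A}
    (h : Function.Commute F (shift 1)) (n : ℤ) : Function.Commute F (shift n) := by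
  have h_neg : Function.Commute F (shift (-1)) :=
    h.inverses_right (fun x => funext fun i => by simp [shift])
      (fun x => funext fun i => by simp [shift])
  induction n using Int.induction_on with
  | zero => exact shift_zero ▸ Function.Commute.id_right
  | succ n ih => exact shift_add n 1 ▸ ih.comp_right h
  | pred n ih => exact shift_add (-n) (-1) ▸ ih.comp_right h_neg

theorem Set.Subsingleton.of_shift_invariant {S : Set (ℤ → A)} {a : A}
    (hS : ∀ n, MapsTo (shift n) S S) (h₀ : ∀ x ∈ S, x 0 = a) : S.Subsingleton :=
  fun x hx y hy => funext fun n => by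
    simpa [shift] using (h₀ _ (hS n hx)).trans (h₀ _ (hS n hy)).symm

end Shift

theorem stmt12_general {A : Type*} [Fintype A] [TopologicalSpace A] [DiscreteTopology A]
    (F : (ℤ → A) → (ℤ → A)) (hF : Continuous F)
    (hcomm : ∀ x : ℤ → A, F (fun i => x (i + 1)) = fun i => F x (i + 1)) :
    (∃ (z : ℤ → A) (q : ℕ), ∀ t ≥ q, F^[t] '' Set.univ = {z})
      ↔ ∃ z : ℤ → A, (⋂ j : ℕ, F^[j] '' Set.univ) = {z} := by
  refine ⟨fun ⟨z, q, hz⟩ => ⟨z, iInter_iterate_image_univ_eq_of_eventually_eq hz⟩, ?_⟩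
  rintro ⟨z, hz⟩
  have hU : IsOpen ((fun x : ℤ → A => x 0) ⁻¹' {z 0}) :=
    (isOpen_discrete _).preimage (continuous_apply 0)
  obtain ⟨q, hq⟩ := exists_iterate_image_univ_subset_of_iInter_subset hF hU
    (hz.trans_subset (singleton_subset_iff.2 rfl))
  refine ⟨z, q, fun t ht => ?_⟩
  have hzt : z ∈ F^[t] '' univ := iInter_subset _ t (hz ▸ mem_singleton z)
  have hsub : (F^[t] '' univ).Subsingleton :=
    .of_shift_invariant
      (fun n => (commute_shift_of_commute_shift_one hcomm n).mapsTo_iterate_image_univ t)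
      fun x hx => hq (antitone_iterate_image_univ F ht hx)
  exact hsub.eq_singleton_of_mem hzt

/-- A cellular automaton on `A^ℤ` is nilpotent iff its limit set is a singleton. -/
theorem stmt12 {A : Type*} [Fintype A] [Nonempty A] [TopologicalSpace A] [DiscreteTopology A]
    (F : (ℤ → A) → (ℤ → A)) (hF : Continuous F)
    (hcomm : ∀ x : ℤ → A, F (fun i => x (i + 1)) = fun i => F x (i + 1)) :
    (∃ (z : ℤ → A) (q : ℕ), ∀ t ≥ q, F^[t] '' Set.univ = {z})
      ↔ ∃ z : ℤ → A, (⋂ j : ℕ, F^[j] '' Set.univ) = {z} :=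
  stmt12_general F hF hcomm
end

section
/- No asymptotically nilpotent DDS is sensitive: if all orbits of (X,F) converge to the same point z (ω_F = {z}), then F has an ε-stable point for every ε > 0. -/
/-- Auxiliary: finitely many iterates are simultaneously continuous at a point. -/
lemma aux_fin_cont {X : Type*} [MetricSpace X] (F : X → X) (hF : Continuous F)
    (x : X) (ε : ℝ) (hε : 0 < ε) :
    ∀ J : ℕ, ∃ δ > (0 : ℝ), ∀ y : X, dist x y < δ →
      ∀ t < J, dist (F^[t] x) (F^[t] y) ≤ ε := by
  intro J
  induction J with
  | zero => exact ⟨1, one_pos, fun y _ t ht => absurd ht (Nat.not_lt_zero t)⟩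
  | succ J ih =>
    obtain ⟨δ1, hδ1, h1⟩ := ih
    have hc : ContinuousAt (F^[J]) x := (hF.iterate J).continuousAt
    rw [Metric.continuousAt_iff] at hc
    obtain ⟨δ2, hδ2, h2⟩ := hc ε hε
    refine ⟨min δ1 δ2, lt_min hδ1 hδ2, fun y hy t ht => ?_⟩
    rcases Nat.lt_succ_iff_lt_or_eq.mp ht with h' | h'
    · exact h1 y (lt_of_lt_of_le hy (min_le_left _ _)) t h'
    · subst h'
      have := h2 (show dist y x < δ2 by rw [dist_comm]; exact lt_of_lt_of_le hy (min_le_right _ _))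
      rw [dist_comm]
      exact le_of_lt this

/-- No asymptotically nilpotent DDS is sensitive: it has an ε-stable point for every ε > 0. -/
theorem stmt16 {X : Type*} [MetricSpace X] [CompactSpace X] [Nonempty X]
    (F : X → X) (hF : Continuous F) (z : X)
    (h : ∀ x : X, Filter.Tendsto (fun t => F^[t] x) Filter.atTop (nhds z)) :
    ∀ ε > (0 : ℝ), ∃ x : X, ∃ δ > (0 : ℝ), ∀ y : X, dist x y < δ →
      ∀ t : ℕ, dist (F^[t] x) (F^[t] y) ≤ ε := by
  intro ε hε
  have hε4 : (0 : ℝ) < ε / 4 := by linarith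
  set f : ℕ → Set X := fun J => ⋂ j, ⋂ (_ : J ≤ j), (F^[j]) ⁻¹' Metric.closedBall z (ε / 4)
    with hf
  have hclosed : ∀ J, IsClosed (f J) := fun J =>
    isClosed_iInter fun j => isClosed_iInter fun _ =>
      (Metric.isClosed_closedBall).preimage (hF.iterate j)
  have hcover : (⋃ J, f J) = Set.univ := by
    apply Set.eq_univ_of_forall
    intro x
    have := (h x).eventually (Metric.closedBall_mem_nhds z hε4)
    rw [Filter.eventually_atTop] at this
    obtain ⟨J, hJ⟩ := this
    exact Set.mem_iUnion.mpr ⟨J, Set.mem_iInter.mpr fun j => Set.mem_iInter.mpr fun hj => hJ j hj⟩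
  obtain ⟨J, x, hx⟩ := nonempty_interior_of_iUnion_of_closed hclosed hcover
  obtain ⟨δ0, hδ0, hball⟩ := Metric.mem_nhds_iff.mp (mem_interior_iff_mem_nhds.mp hx)
  have hxf : x ∈ f J := interior_subset hx
  obtain ⟨δ1, hδ1, h1⟩ := aux_fin_cont F hF x ε hε J
  refine ⟨x, min δ0 δ1, lt_min hδ0 hδ1, fun y hy t => ?_⟩
  rcases lt_or_ge t J with ht | ht
  · exact h1 y (lt_of_lt_of_le hy (min_le_right _ _)) t ht
  · have hyf : y ∈ f J := hball (by
      rw [Metric.mem_ball, dist_comm]; exact lt_of_lt_of_le hy (min_le_left _ _))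
    have hxd : F^[t] x ∈ Metric.closedBall z (ε / 4) := by
      have := Set.mem_iInter.mp hxf t
      exact Set.mem_iInter.mp this ht
    have hyd : F^[t] y ∈ Metric.closedBall z (ε / 4) := by
      have := Set.mem_iInter.mp hyf t
      exact Set.mem_iInter.mp this ht
    rw [Metric.mem_closedBall] at hxd hyd
    calc dist (F^[t] x) (F^[t] y) ≤ dist (F^[t] x) z + dist z (F^[t] y) := dist_triangle _ _ _
      _ ≤ ε / 4 + ε / 4 := add_le_add hxd (by rw [dist_comm]; exact hyd)
      _ ≤ ε := by linarith
end
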